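/- With p ∈ [0,1] and d ∈ ℕ: (i) E[Φ_Even] = E[Φ_Odd] = (1/2)(2−p)^d; (ii) Var(Φ_Even) = Var(Φ_Odd) = 2^{d−1}·((1 − 3p/4)^d − (1 − p/2)^{2d}), and for fixed p ∈ (0,1), Var(Φ_Even) / ((1/2)((4−3p)/2)^d) → 1 as d → ∞; (iii) Cov(Φ_Even, Φ_Odd) = d·((2−p)²/2)^{d−1}·p(1−p)/4, and for fixed p ∈ (0,1) the ratio Cov(Φ_Even, Φ_Odd)/Var(Φ_Even) decays exponentially in d. -/

import Mathlib

open MeasureTheory ProbabilityTheory Filter Finset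

noncomputable section

namespace PercolatedHypercube

abbrev Vertex (d : ℕ) := Fin d → Bool

abbrev Config (d : ℕ) := Sym2 (Vertex d) → Bool

/-- Bernoulli(p) measure on `Bool`. -/
def edgeMeasure (p : ℝ) : Measure Bool :=
  (PMF.bernoulli (min (Real.toNNReal p) 1) (min_le_right _ _)).toMeasure

instance (p : ℝ) : IsProbabilityMeasure (edgeMeasure p) := by
  unfold edgeMeasure; infer_instance

/-- Bond percolation on the hypercube: every (potential) edge open independently w.p. `p`. -/
def percMeasure (d : ℕ) (p : ℝ) : Measure (Config d) :=
  Measure.pi fun _ => edgeMeasure p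

instance (d : ℕ) (p : ℝ) : IsProbabilityMeasure (percMeasure d p) := by
  unfold percMeasure; infer_instance

/-- Adjacency in the hypercube `Q_d`: differ in exactly one coordinate. -/
def adj {d : ℕ} (u v : Vertex d) : Prop :=
  (univ.filter fun i => u i ≠ v i).card = 1

instance {d : ℕ} (u v : Vertex d) : Decidable (adj u v) := by
  unfold adj; infer_instance

/-- The edge between `u` and `v` is an edge of `Q_d` and is retained in `ω`. -/
def openEdge {d : ℕ} (ω : Config d) (u v : Vertex d) : Prop :=
  adj u v ∧ ω s(u, v) = true

instance {d : ℕ} (ω : Config d) (u v : Vertex d) : Decidable (openEdge ω u v) := by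
  unfold openEdge; infer_instance

/-- `N_p(v)`: number of neighbors of `v` in the percolated hypercube. -/
def Np {d : ℕ} (ω : Config d) (v : Vertex d) : ℕ :=
  (univ.filter fun u => openEdge ω u v).card

/-- `N_p(S)` as a set: vertices adjacent in the percolated hypercube to some vertex of `S`. -/
def NpSet {d : ℕ} (ω : Config d) (S : Finset (Vertex d)) : Finset (Vertex d) :=
  univ.filter fun u => ∃ v ∈ S, openEdge ω v u

/-- Independent set of the percolated hypercube: contains no retained edge. -/
def IndepSet {d : ℕ} (ω : Config d) (I : Finset (Vertex d)) : Prop :=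
  ∀ u ∈ I, ∀ v ∈ I, ¬ openEdge ω u v

instance {d : ℕ} (ω : Config d) (I : Finset (Vertex d)) : Decidable (IndepSet ω I) := by
  unfold IndepSet; infer_instance

/-- `Z_{d,p}`: the number of independent sets of the percolated hypercube. -/
def Z (d : ℕ) (ω : Config d) : ℕ :=
  (univ.filter fun I : Finset (Vertex d) => IndepSet ω I).card

def hammingWeight {d : ℕ} (v : Vertex d) : ℕ := (univ.filter fun i => v i = true).card

/-- The even side of the hypercube. -/
def EvenV (d : ℕ) : Finset (Vertex d) := univ.filter fun v => Even (hammingWeight v)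

/-- The odd side of the hypercube. -/
def OddV (d : ℕ) : Finset (Vertex d) := univ.filter fun v => ¬ Even (hammingWeight v)

/-- `φ_v = 2^{-N_p(v)}`. -/
def phi {d : ℕ} (ω : Config d) (v : Vertex d) : ℝ := (2 : ℝ)⁻¹ ^ (Np ω v)

def PhiEven (d : ℕ) (ω : Config d) : ℝ := ∑ v ∈ EvenV d, phi ω v

def PhiOdd (d : ℕ) (ω : Config d) : ℝ := ∑ v ∈ OddV d, phi ω v

/-- `μ_p = (1/2)(2-p)^d`. -/
def muP (d : ℕ) (p : ℝ) : ℝ := (1 / 2) * (2 - p) ^ d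

/-- `σ_p = ((1/2)((4-3p)/2)^d)^{1/2}`. -/
def sigmaP (d : ℕ) (p : ℝ) : ℝ := Real.sqrt ((1 / 2) * ((4 - 3 * p) / 2) ^ d)

/-- The law of a real random variable under the percolation measure. -/
def law (d : ℕ) (p : ℝ) (X : Config d → ℝ) : ProbabilityMeasure ℝ :=
  ⟨(percMeasure d p).map X,
    Measure.isProbabilityMeasure_map (measurable_of_countable X).aemeasurable⟩

/-- The standard Gaussian as a probability measure on `ℝ`. -/
def stdGaussian : ProbabilityMeasure ℝ := ⟨gaussianReal 0 1, inferInstance⟩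


/-- Law of an `ℝ × ℝ`-valued random variable under the percolation measure. -/
def law2 (d : ℕ) (p : ℝ) (X : Config d → ℝ × ℝ) : ProbabilityMeasure (ℝ × ℝ) :=
  ⟨(percMeasure d p).map X,
    Measure.isProbabilityMeasure_map (measurable_of_countable X).aemeasurable⟩

/-- Two independent standard Gaussians. -/
def stdGaussian2 : ProbabilityMeasure (ℝ × ℝ) :=
  ⟨(gaussianReal 0 1).prod (gaussianReal 0 1), inferInstance⟩

/-- Law of `(e^{-1/4}/2^{3/2}) (e^{W₁/√2} + e^{W₂/√2})` for `W₁, W₂` i.i.d. standard Gaussians. -/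
def logNormalLimit : ProbabilityMeasure ℝ :=
  ⟨((gaussianReal 0 1).prod (gaussianReal 0 1)).map (fun w =>
      (Real.exp (-(1 / 4)) / (2 : ℝ) ^ ((3 : ℝ) / 2)) *
        (Real.exp (w.1 / Real.sqrt 2) + Real.exp (w.2 / Real.sqrt 2))),
    Measure.isProbabilityMeasure_map (Measurable.aemeasurable (by fun_prop))⟩

/-- Hard-core partition function `Z_{d,p,λ}`. -/
def Zlam (d : ℕ) (lam : ℝ) (ω : Config d) : ℝ :=
  ∑ I : Finset (Vertex d), if IndepSet ω I then lam ^ I.card else 0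

/-- `μ_{p,λ}`. -/
def muPL (d : ℕ) (p lam : ℝ) : ℝ := (lam / 2) * (2 - 2 * lam * p / (1 + lam)) ^ d

/-- `σ_{p,λ}`. -/
def sigmaPL (d : ℕ) (p lam : ℝ) : ℝ :=
  Real.sqrt ((lam ^ 2 / 2) * (2 * (1 - p + p / (1 + lam) ^ 2)) ^ d)

/-- Law of `(e^{-λ²/4}/2^{3/2}) (e^{λW₁/√2} + e^{λW₂/√2})`. -/
def logNormalLimitLam (lam : ℝ) : ProbabilityMeasure ℝ :=
  ⟨((gaussianReal 0 1).prod (gaussianReal 0 1)).map (fun w =>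
      (Real.exp (-(lam ^ 2 / 4)) / (2 : ℝ) ^ ((3 : ℝ) / 2)) *
        (Real.exp (lam * w.1 / Real.sqrt 2) + Real.exp (lam * w.2 / Real.sqrt 2))),
    Measure.isProbabilityMeasure_map (Measurable.aemeasurable (by fun_prop))⟩

/-- Law of `e^{W₁/√2} + e^{W₂/√2}` for independent standard Gaussians. -/
def expSumGaussians : ProbabilityMeasure ℝ :=
  ⟨((gaussianReal 0 1).prod (gaussianReal 0 1)).map (fun w =>
      Real.exp (w.1 / Real.sqrt 2) + Real.exp (w.2 / Real.sqrt 2)),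
    Measure.isProbabilityMeasure_map (Measurable.aemeasurable (by fun_prop))⟩

/-- Law of `e^{λW₁/√2} + e^{λW₂/√2}` for independent standard Gaussians. -/
def expSumGaussiansLam (lam : ℝ) : ProbabilityMeasure ℝ :=
  ⟨((gaussianReal 0 1).prod (gaussianReal 0 1)).map (fun w =>
      Real.exp (lam * w.1 / Real.sqrt 2) + Real.exp (lam * w.2 / Real.sqrt 2)),
    Measure.isProbabilityMeasure_map (Measurable.aemeasurable (by fun_prop))⟩

/-- Poisson(μ) probability mass function. -/
def poissonPdf (μ : ℝ) (n : ℕ) : ℝ := Real.exp (-μ) * μ ^ n / n.factorial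

/-- Total-variation distance between two (mass functions of) distributions on `ℕ`. -/
def tvN (P Q : ℕ → ℝ) : ℝ := (1 / 2) * ∑' n, |P n - Q n|

/-- Total-variation distance between distributions on subsets of the hypercube. -/
def tvF (d : ℕ) (P Q : Finset (Vertex d) → ℝ) : ℝ :=
  (1 / 2) * ∑ S : Finset (Vertex d), |P S - Q S|

/-- Mass function of `min(|S ∩ Even|, |S ∩ Odd|)` for `S` uniform on independent sets. -/
def defectPMF (d : ℕ) (ω : Config d) (n : ℕ) : ℝ :=
  ((univ.filter fun I : Finset (Vertex d) =>
      IndepSet ω I ∧ min (I ∩ EvenV d).card (I ∩ OddV d).card = n).card : ℝ) / Z d ω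

/-- Mass function of the uniform distribution on independent sets. -/
def uniformPMF (d : ℕ) (ω : Config d) (S : Finset (Vertex d)) : ℝ :=
  (if IndepSet ω S then 1 else 0) / Z d ω

open scoped Classical in
/-- Mass function of the output of the approximate sampler, conditionally on the chosen side `H`:
steps (2)-(4) of the sampling procedure. -/
def approxCond (d : ℕ) (ω : Config d) (H S : Finset (Vertex d)) : ℝ :=
  if Disjoint (S \ H) (NpSet ω (S ∩ H)) then
    (∏ v ∈ S ∩ H, phi ω v / (1 + phi ω v)) *
      (∏ v ∈ H \ S, 1 / (1 + phi ω v)) *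
      (2 : ℝ)⁻¹ ^ (Hᶜ \ NpSet ω (S ∩ H)).card
  else 0

/-- Mass function of the output of the approximate sampler with `H` uniform on {Even, Odd}. -/
def approxPMFHalf (d : ℕ) (ω : Config d) (S : Finset (Vertex d)) : ℝ :=
  (1 / 2) * approxCond d ω (EvenV d) S + (1 / 2) * approxCond d ω (OddV d) S

def wEven (d : ℕ) (ω : Config d) : ℝ :=
  Real.exp (PhiEven d ω) / (Real.exp (PhiEven d ω) + Real.exp (PhiOdd d ω))

def wOdd (d : ℕ) (ω : Config d) : ℝ :=
  Real.exp (PhiOdd d ω) / (Real.exp (PhiEven d ω) + Real.exp (PhiOdd d ω))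

/-- Mass function of the output of the approximate sampler with `Φ`-biased side choice. -/
def approxPMF (d : ℕ) (ω : Config d) (S : Finset (Vertex d)) : ℝ :=
  wEven d ω * approxCond d ω (EvenV d) S + wOdd d ω * approxCond d ω (OddV d) S

/-- Mass function of `|S₁|`, conditionally on the chosen side `H`. -/
def s1SidePMF (d : ℕ) (ω : Config d) (H : Finset (Vertex d)) (n : ℕ) : ℝ :=
  ∑ T : Finset (Vertex d), if T ⊆ H ∧ T.card = n then
    (∏ v ∈ T, phi ω v / (1 + phi ω v)) * ∏ v ∈ H \ T, 1 / (1 + phi ω v)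
  else 0

/-- Mass function of `|S₁|` under the approximate sampler with `Φ`-biased side choice. -/
def s1PMF (d : ℕ) (ω : Config d) (n : ℕ) : ℝ :=
  wEven d ω * s1SidePMF d ω (EvenV d) n + wOdd d ω * s1SidePMF d ω (OddV d) n

/-- `u` and `v` are 2-neighbors: at Hamming distance exactly 2. -/
def twoNbr {d : ℕ} (u v : Vertex d) : Prop :=
  (univ.filter fun i => u i ≠ v i).card = 2

instance {d : ℕ} (u v : Vertex d) : Decidable (twoNbr u v) := by
  unfold twoNbr; infer_instance

/-- `Good^Even`: subsets of the even side of size at most `2^d/d²` with no two 2-neighbors. -/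
def GoodEven (d : ℕ) (S : Finset (Vertex d)) : Prop :=
  S ⊆ EvenV d ∧ ((S.card : ℝ) ≤ 2 ^ d / d ^ 2) ∧
    ∀ u ∈ S, ∀ v ∈ S, u ≠ v → ¬ twoNbr u v

/-- `Good^Odd`. -/
def GoodOdd (d : ℕ) (S : Finset (Vertex d)) : Prop :=
  S ⊆ OddV d ∧ ((S.card : ℝ) ≤ 2 ^ d / d ^ 2) ∧
    ∀ u ∈ S, ∀ v ∈ S, u ≠ v → ¬ twoNbr u v

open scoped Classical in
/-- `Σ_{S ∈ Good^Even} 2^{-N_p(S)}`. -/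
def goodSumEven (d : ℕ) (ω : Config d) : ℝ :=
  ∑ S : Finset (Vertex d), if GoodEven d S then (2 : ℝ)⁻¹ ^ (NpSet ω S).card else 0

open scoped Classical in
/-- `Σ_{S ∈ Good^Odd} 2^{-N_p(S)}`. -/
def goodSumOdd (d : ℕ) (ω : Config d) : ℝ :=
  ∑ S : Finset (Vertex d), if GoodOdd d S then (2 : ℝ)⁻¹ ^ (NpSet ω S).card else 0

open scoped Classical in
/-- `Σ_{S ∈ Good^Even, |S| = m} 2^{-N_p(S)}`. -/
def goodSumEvenM (d : ℕ) (ω : Config d) (m : ℕ) : ℝ :=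
  ∑ S : Finset (Vertex d),
    if GoodEven d S ∧ S.card = m then (2 : ℝ)⁻¹ ^ (NpSet ω S).card else 0

/-- `ζ_p`. -/
def zeta (p : ℝ) : ℝ := if p = 2 / 3 then Real.exp (-(1 / 4)) else 1

/-- The window of relevant sizes: `{m : |m - μ_p| ≤ μ_p^{0.6}}`. -/
def Window (d : ℕ) (p : ℝ) : Set ℕ :=
  {m | |(m : ℝ) - muP d p| ≤ muP d p ^ (0.6 : ℝ)}

open scoped Classical in
/-- Mass function at `v` of the random measure `π` on the even side, `π(v) ∝ φ_v`. -/
def piPMF (d : ℕ) (ω : Config d) (v : Vertex d) : ℝ :=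
  if v ∈ EvenV d then phi ω v / PhiEven d ω else 0

/-- Number of colliding pairs among the sample `x`. -/
def nCollide {d : ℕ} (n : ℕ) (x : Fin n → Vertex d) : ℕ :=
  (univ.filter fun ij : Fin n × Fin n =>
    ij.1 < ij.2 ∧ (x ij.1 = x ij.2 ∨ twoNbr (x ij.1) (x ij.2))).card

/-- Mass function of the law `L_{n,d}` of the number of collisions among `n` i.i.d. samples
from `π`. -/
def collideLaw (d : ℕ) (ω : Config d) (n k : ℕ) : ℝ :=
  ∑ x : Fin n → Vertex d, if nCollide n x = k then ∏ i, piPMF d ω (x i) else 0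

open scoped Classical in
/-- `π(Collide_n)`: probability that some two of the `n` i.i.d. samples from `π` collide. -/
def collideProb (d : ℕ) (ω : Config d) (n : ℕ) : ℝ :=
  ∑ x : Fin n → Vertex d,
    if (∃ i j : Fin n, i < j ∧ (x i = x j ∨ twoNbr (x i) (x j)))
    then ∏ i, piPMF d ω (x i) else 0

/-- `Bad^Even`: subsets of the even side of size at most `2^d/d²` containing two distinct
2-neighbors. -/
def BadEven (d : ℕ) (S : Finset (Vertex d)) : Prop :=
  S ⊆ EvenV d ∧ ((S.card : ℝ) ≤ 2 ^ d / d ^ 2) ∧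
    ∃ u ∈ S, ∃ v ∈ S, u ≠ v ∧ twoNbr u v

open scoped Classical in
/-- `Σ_{S ∈ Bad^Even} 2^{-N_p(S)}`. -/
def badSumEven (d : ℕ) (ω : Config d) : ℝ :=
  ∑ S : Finset (Vertex d), if BadEven d S then (2 : ℝ)⁻¹ ^ (NpSet ω S).card else 0

/-- Hard-core `φ_{v,λ} = λ(1+λ)^{-N_p(v)}`. -/
def phiL {d : ℕ} (lam : ℝ) (ω : Config d) (v : Vertex d) : ℝ :=
  lam * (1 + lam)⁻¹ ^ (Np ω v)

def PhiEvenL (d : ℕ) (lam : ℝ) (ω : Config d) : ℝ := ∑ v ∈ EvenV d, phiL lam ω v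

def PhiOddL (d : ℕ) (lam : ℝ) (ω : Config d) : ℝ := ∑ v ∈ OddV d, phiL lam ω v

/-!
Write `φ_v = ∏_{e ∋ v} w(ω_e)` with `w(open) = 1/2`, `w(closed) = 1`. Since the edges are
independent, `E φ_v = (1 - p/2)^d` and `E[φ_u φ_v] = (1 - 3p/4)^c (1 - p/2)^{2(d-c)}`, where `c`
is the number of edges shared by `u` and `v`: `d` if `u = v`, `1` if `u ~ v`, `0` otherwise.
So `φ_u` and `φ_v` are uncorrelated unless `u = v` or `u ~ v`. Each side of `Q_d` is an
independent set, so `Var Φ_Even` is the sum of `2^{d-1}` equal variances, while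
`Cov(Φ_Even, Φ_Odd)` is the sum over the `d 2^{d-1}` edges of one adjacent covariance. With
`ρ = (1 - p/2)^2 / (1 - 3p/4) < 1` this reads `Var = ½ (2 - 3p/2)^d (1 - ρ^d)` and
`Cov / Var = d ρ^{d-1} (1 - ρ) / (1 - ρ^d)`, which gives the asymptotic claims.
-/

variable {d : ℕ}

section Hypercube

def flipAt (v : Vertex d) (i : Fin d) : Vertex d := Function.update v i (!v i)

lemma adj_comm {u v : Vertex d} : adj u v ↔ adj v u := by
  simp only [adj, ne_comm]

lemma adj_irrefl (v : Vertex d) : ¬ adj v v := by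
  simp [adj]

lemma ne_of_adj {u v : Vertex d} (h : adj u v) : u ≠ v := by
  rintro rfl
  exact adj_irrefl u h

lemma adj_iff_exists_flipAt {u v : Vertex d} : adj u v ↔ ∃ i, u = flipAt v i := by
  simp only [adj, card_eq_one, Finset.ext_iff, funext_iff, flipAt, Function.update_apply,
    mem_filter, mem_univ, true_and, mem_singleton]
  refine exists_congr fun i => forall_congr' fun j => ?_
  by_cases hj : j = i
  · subst hj; cases u j <;> cases v j <;> simp
  · cases u j <;> cases v j <;> simp [hj]

lemma flipAt_adj (v : Vertex d) (i : Fin d) : adj (flipAt v i) v :=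
  adj_iff_exists_flipAt.mpr ⟨i, rfl⟩

lemma flipAt_flipAt (v : Vertex d) (i : Fin d) : flipAt (flipAt v i) i = v := by
  simp [flipAt]

lemma flipAt_injective (v : Vertex d) : Function.Injective (flipAt v) := by
  intro i j h
  by_contra hij
  have := congrFun h i
  simp [flipAt, hij] at this

lemma card_adj (v : Vertex d) : (univ.filter (adj · v)).card = d := by
  have : univ.filter (adj · v) = univ.image (flipAt v) := by
    ext u; simp [adj_iff_exists_flipAt, eq_comm]
  rw [this, card_image_of_injective _ (flipAt_injective v), card_univ, Fintype.card_fin]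

lemma hammingWeight_add_hammingWeight (u v : Vertex d) :
    hammingWeight u + hammingWeight v
      = (univ.filter fun i => u i ≠ v i).card + 2 * (univ.filter fun i => u i ∧ v i).card := by
  simp only [hammingWeight, card_filter, mul_sum, ← sum_add_distrib]
  refine sum_congr rfl fun i _ => ?_
  cases u i <;> cases v i <;> rfl

lemma even_hammingWeight_iff_of_adj {u v : Vertex d} (h : adj u v) :
    Even (hammingWeight u) ↔ ¬ Even (hammingWeight v) := by
  have hsum := hammingWeight_add_hammingWeight u v
  rw [show (univ.filter fun i => u i ≠ v i).card = 1 from h] at hsum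
  have : ¬ Even (hammingWeight u + hammingWeight v) := by
    rw [hsum]; simp [Nat.even_add]
  rw [Nat.even_add] at this
  tauto

lemma not_adj_of_mem_EvenV {u v : Vertex d} (hu : u ∈ EvenV d) (hv : v ∈ EvenV d) :
    ¬ adj u v := by
  simp only [EvenV, mem_filter, mem_univ, true_and] at hu hv
  exact fun h => (even_hammingWeight_iff_of_adj h).mp hu hv

lemma not_adj_of_mem_OddV {u v : Vertex d} (hu : u ∈ OddV d) (hv : v ∈ OddV d) :
    ¬ adj u v := by
  simp only [OddV, mem_filter, mem_univ, true_and] at hu hv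
  exact fun h => hu ((even_hammingWeight_iff_of_adj h).mpr hv)

lemma mem_OddV_iff_of_adj {u v : Vertex d} (h : adj u v) : u ∈ OddV d ↔ v ∈ EvenV d := by
  simp only [EvenV, OddV, mem_filter, mem_univ, true_and]
  have := even_hammingWeight_iff_of_adj h
  tauto

lemma card_EvenV_eq_card_OddV (hd : 0 < d) : (EvenV d).card = (OddV d).card := by
  let i : Fin d := ⟨0, hd⟩
  refine card_bij' (fun v _ => flipAt v i) (fun v _ => flipAt v i) (fun v hv => ?_)
    (fun v hv => ?_) (fun v _ => flipAt_flipAt v i) (fun v _ => flipAt_flipAt v i)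
  · exact (mem_OddV_iff_of_adj (flipAt_adj v i)).mpr hv
  · exact (mem_OddV_iff_of_adj (adj_comm.mp (flipAt_adj v i))).mp hv

lemma card_EvenV (hd : 0 < d) : (EvenV d).card = 2 ^ (d - 1) := by
  have hsum : (EvenV d).card + (OddV d).card = 2 ^ d := by
    rw [EvenV, OddV, card_filter_add_card_filter_not, card_univ, Fintype.card_fun,
      Fintype.card_bool, Fintype.card_fin]
  have hpow : 2 ^ d = 2 ^ (d - 1) * 2 := by rw [← pow_succ, Nat.sub_add_cancel hd]
  rw [← card_EvenV_eq_card_OddV hd] at hsum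
  omega

lemma card_OddV (hd : 0 < d) : (OddV d).card = 2 ^ (d - 1) :=
  card_EvenV_eq_card_OddV hd ▸ card_EvenV hd

end Hypercube

section Edges

def incidentEdges (v : Vertex d) : Finset (Sym2 (Vertex d)) :=
  (univ.filter (adj · v)).image (s(·, v))

lemma card_incidentEdges (v : Vertex d) : (incidentEdges v).card = d := by
  rw [incidentEdges, card_image_of_injective _ fun _ _ => Sym2.congr_left.mp, card_adj]

lemma incidentEdges_inter_of_ne {u v : Vertex d} (h : u ≠ v) :
    incidentEdges u ∩ incidentEdges v = if adj u v then {s(u, v)} else ∅ := by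
  ext e
  simp only [incidentEdges, mem_inter, mem_image, mem_filter, mem_univ, true_and]
  constructor
  · rintro ⟨⟨a, ha, rfl⟩, b, hb, hab⟩
    rcases Sym2.eq_iff.mp hab with ⟨-, rfl⟩ | ⟨rfl, rfl⟩
    · exact absurd rfl h
    · simp [adj_comm.mp ha, Sym2.eq_swap]
  · split_ifs with hadj
    · rw [mem_singleton]
      rintro rfl
      exact ⟨⟨v, adj_comm.mp hadj, Sym2.eq_swap⟩, u, hadj, rfl⟩
    · simp

lemma Np_eq_card_filter_incidentEdges (ω : Config d) (v : Vertex d) :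
    Np ω v = ((incidentEdges v).filter (ω · = true)).card := by
  rw [Np, incidentEdges, filter_image, card_image_of_injective _ fun _ _ => Sym2.congr_left.mp,
    filter_filter]
  rfl

def openWeight (b : Bool) : ℝ := if b then 2⁻¹ else 1

lemma phi_eq_prod_openWeight (ω : Config d) (v : Vertex d) :
    phi ω v = ∏ e ∈ incidentEdges v, openWeight (ω e) := by
  simp only [openWeight, prod_ite, prod_const, one_pow, mul_one, phi,
    Np_eq_card_filter_incidentEdges]

end Edges

section Integrals

variable {p : ℝ}

lemma integral_edgeMeasure (hp0 : 0 ≤ p) (hp1 : p ≤ 1) (g : Bool → ℝ) :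
    ∫ b, g b ∂edgeMeasure p = (1 - p) * g false + p * g true := by
  have hp : ((min (Real.toNNReal p) 1 : NNReal) : ℝ) = p := by
    rw [min_eq_left (Real.toNNReal_le_one.mpr hp1), Real.coe_toNNReal _ hp0]
  simp only [edgeMeasure, PMF.integral_eq_sum, Fintype.sum_bool, PMF.bernoulli_apply,
    cond_true, cond_false, smul_eq_mul, ENNReal.coe_toReal, NNReal.coe_sub (min_le_right _ _),
    NNReal.coe_one, hp]
  ring

lemma integral_finset_prod_pi {ι α : Type*} [Fintype ι] [MeasurableSpace α]
    {μ : ι → Measure α} [∀ i, IsProbabilityMeasure (μ i)] (s : Finset ι) (g : ι → α → ℝ) :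
    ∫ x, ∏ i ∈ s, g i (x i) ∂Measure.pi μ = ∏ i ∈ s, ∫ a, g i a ∂μ i := by
  classical
  have hext (x : ι → α) : ∏ i ∈ s, g i (x i) = ∏ i, if i ∈ s then g i (x i) else 1 := by
    rw [prod_ite_mem, univ_inter]
  simp_rw [hext]
  rw [integral_fintype_prod_eq_prod (fun i a => if i ∈ s then g i a else 1), ← univ_inter s,
    ← prod_ite_mem]
  refine prod_congr rfl fun i _ => ?_
  by_cases hi : i ∈ s <;> simp [hi]

lemma integral_prod_openWeight_mul_prod_openWeight (hp0 : 0 ≤ p) (hp1 : p ≤ 1)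
    (A B : Finset (Sym2 (Vertex d))) :
    ∫ ω, (∏ e ∈ A, openWeight (ω e)) * ∏ e ∈ B, openWeight (ω e) ∂percMeasure d p
      = (1 - 3 * p / 4) ^ (A ∩ B).card * (1 - p / 2) ^ ((A ∪ B) \ (A ∩ B)).card := by
  have hext (ω : Config d) : (∏ e ∈ A, openWeight (ω e)) * ∏ e ∈ B, openWeight (ω e)
      = ∏ e ∈ A ∪ B, openWeight (ω e) * (if e ∈ A ∩ B then openWeight (ω e) else 1) := by
    rw [← prod_union_inter, prod_mul_distrib, prod_ite_mem,
      inter_eq_right.mpr inter_subset_union]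
  have hedge (e : Sym2 (Vertex d)) :
      ∫ b, openWeight b * (if e ∈ A ∩ B then openWeight b else 1) ∂edgeMeasure p
        = if e ∈ A ∩ B then 1 - 3 * p / 4 else 1 - p / 2 := by
    rw [integral_edgeMeasure hp0 hp1]
    split_ifs <;> simp only [openWeight] <;> norm_num <;> ring
  simp_rw [hext]
  rw [percMeasure, integral_finset_prod_pi (A ∪ B)
    fun e b => openWeight b * if e ∈ A ∩ B then openWeight b else 1,
    prod_congr rfl fun e _ => hedge e, prod_ite,
    prod_const, prod_const, filter_mem_eq_inter, filter_notMem_eq_sdiff,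
    inter_eq_right.mpr inter_subset_union]

end Integrals

section Moments

variable {p : ℝ}

lemma integral_phi (hp0 : 0 ≤ p) (hp1 : p ≤ 1) (v : Vertex d) :
    ∫ ω, phi ω v ∂percMeasure d p = (1 - p / 2) ^ d := by
  simp_rw [phi_eq_prod_openWeight]
  rw [percMeasure, integral_finset_prod_pi (incidentEdges v) fun _ b => openWeight b]
  simp only [integral_edgeMeasure hp0 hp1, openWeight, prod_const, card_incidentEdges]
  norm_num
  ring

lemma integral_phi_mul_phi (hp0 : 0 ≤ p) (hp1 : p ≤ 1) (u v : Vertex d) :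
    ∫ ω, phi ω u * phi ω v ∂percMeasure d p
      = (1 - 3 * p / 4) ^ (incidentEdges u ∩ incidentEdges v).card
        * (1 - p / 2) ^ (2 * (d - (incidentEdges u ∩ incidentEdges v).card)) := by
  simp_rw [phi_eq_prod_openWeight]
  rw [integral_prod_openWeight_mul_prod_openWeight hp0 hp1,
    card_sdiff_of_subset inter_subset_union]
  have hunion := card_union_add_card_inter (incidentEdges u) (incidentEdges v)
  have hinter : (incidentEdges u ∩ incidentEdges v).card ≤ d :=
    (card_le_card inter_subset_left).trans (card_incidentEdges u).le
  simp only [card_incidentEdges] at hunion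
  congr 2
  omega

lemma covariance_phi (hp0 : 0 ≤ p) (hp1 : p ≤ 1) (u v : Vertex d) :
    cov[(phi · u), (phi · v); percMeasure d p]
      = (1 - 3 * p / 4) ^ (incidentEdges u ∩ incidentEdges v).card
          * (1 - p / 2) ^ (2 * (d - (incidentEdges u ∩ incidentEdges v).card))
        - (1 - p / 2) ^ (2 * d) := by
  rw [covariance_eq_sub .of_discrete .of_discrete]
  simp only [Pi.mul_apply, integral_phi_mul_phi hp0 hp1, integral_phi hp0 hp1]
  ring

lemma covariance_phi_self (hp0 : 0 ≤ p) (hp1 : p ≤ 1) (v : Vertex d) :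
    cov[(phi · v), (phi · v); percMeasure d p] = (1 - 3 * p / 4) ^ d - (1 - p / 2) ^ (2 * d) := by
  rw [covariance_phi hp0 hp1, inter_self, card_incidentEdges, Nat.sub_self, mul_zero, pow_zero,
    mul_one]

lemma covariance_phi_of_adj (hp0 : 0 ≤ p) (hp1 : p ≤ 1) {u v : Vertex d} (h : adj u v) :
    cov[(phi · u), (phi · v); percMeasure d p]
      = (1 - 3 * p / 4) * (1 - p / 2) ^ (2 * (d - 1)) - (1 - p / 2) ^ (2 * d) := by
  rw [covariance_phi hp0 hp1, incidentEdges_inter_of_ne (ne_of_adj h),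
    if_pos h, card_singleton, pow_one]

lemma covariance_phi_of_not_adj (hp0 : 0 ≤ p) (hp1 : p ≤ 1) {u v : Vertex d} (hne : u ≠ v)
    (h : ¬ adj u v) : cov[(phi · u), (phi · v); percMeasure d p] = 0 := by
  rw [covariance_phi hp0 hp1, incidentEdges_inter_of_ne hne, if_neg h, card_empty, pow_zero,
    one_mul, Nat.sub_zero, sub_self]

lemma PhiEven_eq_sum : PhiEven d = fun ω => ∑ v ∈ EvenV d, phi ω v := rfl

lemma PhiOdd_eq_sum : PhiOdd d = fun ω => ∑ v ∈ OddV d, phi ω v := rfl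

lemma integral_sum_phi (hp0 : 0 ≤ p) (hp1 : p ≤ 1) (S : Finset (Vertex d)) :
    ∫ ω, ∑ v ∈ S, phi ω v ∂percMeasure d p = S.card * (1 - p / 2) ^ d := by
  rw [integral_finsetSum _ fun _ _ => .of_finite]
  simp [integral_phi hp0 hp1]

lemma variance_sum_phi (hp0 : 0 ≤ p) (hp1 : p ≤ 1) (S : Finset (Vertex d))
    (hS : ∀ u ∈ S, ∀ v ∈ S, ¬ adj u v) :
    Var[fun ω => ∑ v ∈ S, phi ω v; percMeasure d p]
      = S.card * ((1 - 3 * p / 4) ^ d - (1 - p / 2) ^ (2 * d)) := by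
  rw [← covariance_self (by fun_prop), covariance_fun_sum_fun_sum' (fun _ _ => .of_discrete)
    (fun _ _ => .of_discrete)]
  have hrow : ∀ u ∈ S, ∑ v ∈ S, cov[(phi · u), (phi · v); percMeasure d p]
      = (1 - 3 * p / 4) ^ d - (1 - p / 2) ^ (2 * d) := fun u hu => by
    rw [sum_eq_single_of_mem u hu fun v hv hne =>
      covariance_phi_of_not_adj hp0 hp1 hne.symm (hS u hu v hv), covariance_phi_self hp0 hp1]
  rw [sum_congr rfl hrow, sum_const, nsmul_eq_mul]

lemma card_filter_adj_OddV {u : Vertex d} (hu : u ∈ EvenV d) :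
    ((OddV d).filter (adj u ·)).card = d := by
  refine Eq.trans (congrArg card ?_) (card_adj u)
  ext v
  simp only [mem_filter, mem_univ, true_and, adj_comm (u := u)]
  exact ⟨And.right, fun h => ⟨(mem_OddV_iff_of_adj h).mpr hu, h⟩⟩

lemma covariance_sum_phi_EvenV_OddV (hp0 : 0 ≤ p) (hp1 : p ≤ 1) (hd : 0 < d) :
    cov[PhiEven d, PhiOdd d; percMeasure d p]
      = 2 ^ (d - 1) * d
        * ((1 - 3 * p / 4) * (1 - p / 2) ^ (2 * (d - 1)) - (1 - p / 2) ^ (2 * d)) := by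
  rw [PhiEven_eq_sum, PhiOdd_eq_sum,
    covariance_fun_sum_fun_sum' (fun _ _ => .of_discrete) (fun _ _ => .of_discrete)]
  have hrow : ∀ u ∈ EvenV d, ∑ v ∈ OddV d, cov[(phi · u), (phi · v); percMeasure d p]
      = d * ((1 - 3 * p / 4) * (1 - p / 2) ^ (2 * (d - 1)) - (1 - p / 2) ^ (2 * d)) := by
    intro u hu
    have hne : ∀ v ∈ OddV d, u ≠ v := fun v hv huv => by
      simp only [EvenV, OddV, mem_filter, huv] at hu hv
      exact hv.2 hu.2
    rw [← sum_filter_add_sum_filter_not _ (adj u ·),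
      sum_congr rfl fun v hv => covariance_phi_of_adj hp0 hp1 (mem_filter.mp hv).2,
      sum_congr rfl fun v hv => covariance_phi_of_not_adj hp0 hp1
        (hne v (mem_filter.mp hv).1) (mem_filter.mp hv).2,
      sum_const, sum_const_zero, card_filter_adj_OddV hu, nsmul_eq_mul, add_zero]
  rw [sum_congr rfl hrow, sum_const, nsmul_eq_mul, card_EvenV hd]
  push_cast
  ring

end Moments

section ClosedForms

variable {p : ℝ}

lemma two_pow_pred_mul_pow (hd : 0 < d) (x : ℝ) :
    (2 : ℝ) ^ (d - 1) * x ^ d = 1 / 2 * (2 * x) ^ d := by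
  obtain ⟨n, rfl⟩ : ∃ n, d = n + 1 := ⟨d - 1, by omega⟩
  rw [Nat.add_sub_cancel, mul_pow, pow_succ]
  ring

lemma integral_PhiEven (hp0 : 0 ≤ p) (hp1 : p ≤ 1) (hd : 0 < d) :
    ∫ ω, PhiEven d ω ∂percMeasure d p = 1 / 2 * (2 - p) ^ d := by
  rw [PhiEven_eq_sum, integral_sum_phi hp0 hp1, card_EvenV hd]
  push_cast
  rw [two_pow_pred_mul_pow hd]
  ring

lemma integral_PhiOdd (hp0 : 0 ≤ p) (hp1 : p ≤ 1) (hd : 0 < d) :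
    ∫ ω, PhiOdd d ω ∂percMeasure d p = 1 / 2 * (2 - p) ^ d := by
  rw [PhiOdd_eq_sum, integral_sum_phi hp0 hp1, card_OddV hd]
  push_cast
  rw [two_pow_pred_mul_pow hd]
  ring

lemma variance_PhiEven (hp0 : 0 ≤ p) (hp1 : p ≤ 1) (hd : 0 < d) :
    Var[PhiEven d; percMeasure d p]
      = 2 ^ (d - 1) * ((1 - 3 * p / 4) ^ d - (1 - p / 2) ^ (2 * d)) := by
  rw [PhiEven_eq_sum, variance_sum_phi hp0 hp1 _ fun _ hu _ hv => not_adj_of_mem_EvenV hu hv,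
    card_EvenV hd]
  push_cast
  rfl

lemma variance_PhiOdd (hp0 : 0 ≤ p) (hp1 : p ≤ 1) (hd : 0 < d) :
    Var[PhiOdd d; percMeasure d p]
      = 2 ^ (d - 1) * ((1 - 3 * p / 4) ^ d - (1 - p / 2) ^ (2 * d)) := by
  rw [PhiOdd_eq_sum, variance_sum_phi hp0 hp1 _ fun _ hu _ hv => not_adj_of_mem_OddV hu hv,
    card_OddV hd]
  push_cast
  rfl

lemma covariance_PhiEven_PhiOdd (hp0 : 0 ≤ p) (hp1 : p ≤ 1) (hd : 0 < d) :
    ∫ ω, (PhiEven d ω - 1 / 2 * (2 - p) ^ d) * (PhiOdd d ω - 1 / 2 * (2 - p) ^ d)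
        ∂percMeasure d p
      = d * ((2 - p) ^ 2 / 2) ^ (d - 1) * (p * (1 - p) / 4) := by
  have h := covariance_sum_phi_EvenV_OddV hp0 hp1 hd
  rw [covariance, integral_PhiEven hp0 hp1 hd, integral_PhiOdd hp0 hp1 hd] at h
  rw [h, show (2 - p) ^ 2 / 2 = 2 * (1 - p / 2) ^ 2 by ring, mul_pow, ← pow_mul]
  obtain ⟨n, rfl⟩ : ∃ n, d = n + 1 := ⟨d - 1, by omega⟩
  rw [Nat.add_sub_cancel, mul_add, pow_add]
  ring

end ClosedForms

section Asymptotics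

lemma exists_nat_mul_pow_le_exp {ρ : ℝ} (h0 : 0 < ρ) (h1 : ρ < 1) :
    ∃ C > (0 : ℝ), ∃ c > (0 : ℝ), ∀ n : ℕ, n * ρ ^ n ≤ C * Real.exp (-c * n) := by
  set c := -Real.log ρ / 2
  have hc : 0 < c := by have := Real.log_neg h0 h1; simp only [c]; linarith
  refine ⟨c⁻¹, inv_pos.mpr hc, c, hc, fun n => ?_⟩
  -- `ρ ^ n = exp (-c n) ^ 2`, and `c n ≤ exp (c n)` bounds `n exp (-c n)` by `1 / c`.
  have hpow : ρ ^ n = Real.exp (-c * n) * Real.exp (-c * n) := by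
    rw [← Real.exp_add, ← Real.rpow_natCast, Real.rpow_def_of_pos h0]
    simp only [c]
    ring_nf
  have hlin : c * n * Real.exp (-c * n) ≤ 1 := by
    rw [neg_mul, Real.exp_neg, ← div_eq_mul_inv, div_le_one (Real.exp_pos _)]
    linarith [Real.add_one_le_exp (c * n)]
  calc n * ρ ^ n = c⁻¹ * (c * n * Real.exp (-c * n)) * Real.exp (-c * n) := by
        rw [hpow]; field_simp
    _ ≤ c⁻¹ * 1 * Real.exp (-c * n) := by gcongr
    _ = c⁻¹ * Real.exp (-c * n) := by ring

variable {p : ℝ}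

def decayRate (p : ℝ) : ℝ := (1 - p / 2) ^ 2 / (1 - 3 * p / 4)

lemma decayRate_pos (hp1 : p ≤ 1) : 0 < decayRate p := by
  unfold decayRate
  have : 0 < 1 - p / 2 := by linarith
  have : 0 < 1 - 3 * p / 4 := by linarith
  positivity

lemma decayRate_lt_one (hp0 : 0 < p) (hp1 : p < 1) : decayRate p < 1 := by
  rw [decayRate, div_lt_one (by linarith)]
  nlinarith

lemma sq_one_sub_half_eq (hp1 : p ≤ 1) : (1 - p / 2) ^ 2 = decayRate p * (1 - 3 * p / 4) := by
  rw [decayRate, div_mul_cancel₀ _ (by linarith)]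

lemma variance_PhiEven_eq_mul (hp0 : 0 ≤ p) (hp1 : p ≤ 1) (hd : 0 < d) :
    Var[PhiEven d; percMeasure d p]
      = 1 / 2 * ((4 - 3 * p) / 2) ^ d * (1 - decayRate p ^ d) := by
  rw [variance_PhiEven hp0 hp1 hd, pow_mul, sq_one_sub_half_eq hp1, mul_pow,
    show (4 - 3 * p) / 2 = 2 * (1 - 3 * p / 4) by ring, ← two_pow_pred_mul_pow hd]
  ring

lemma covariance_PhiEven_PhiOdd_eq_mul (hp0 : 0 ≤ p) (hp1 : p ≤ 1) (hd : 0 < d) :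
    ∫ ω, (PhiEven d ω - 1 / 2 * (2 - p) ^ d) * (PhiOdd d ω - 1 / 2 * (2 - p) ^ d)
        ∂percMeasure d p
      = 1 / 2 * ((4 - 3 * p) / 2) ^ d * (d * decayRate p ^ (d - 1) * (1 - decayRate p)) := by
  rw [covariance_PhiEven_PhiOdd hp0 hp1 hd,
    show (2 - p) ^ 2 / 2 = 2 * (1 - p / 2) ^ 2 by ring,
    show p * (1 - p) / 4 = (1 - 3 * p / 4) - (1 - p / 2) ^ 2 by ring, sq_one_sub_half_eq hp1,
    show (4 - 3 * p) / 2 = 2 * (1 - 3 * p / 4) by ring, ← two_pow_pred_mul_pow hd]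
  obtain ⟨n, rfl⟩ : ∃ n, d = n + 1 := ⟨d - 1, by omega⟩
  simp only [Nat.add_sub_cancel, mul_pow]
  push_cast
  ring

lemma tendsto_variance_PhiEven_div (hp0 : 0 < p) (hp1 : p < 1) :
    Tendsto (fun d => Var[PhiEven d; percMeasure d p] / (1 / 2 * ((4 - 3 * p) / 2) ^ d))
      atTop (nhds 1) := by
  have hlim : Tendsto (fun d => 1 - decayRate p ^ d) atTop (nhds 1) := by
    simpa using tendsto_const_nhds.sub (tendsto_pow_atTop_nhds_zero_of_lt_one
      (decayRate_pos hp1.le).le (decayRate_lt_one hp0 hp1))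
  refine hlim.congr' ?_
  filter_upwards [eventually_gt_atTop 0] with d hd
  rw [variance_PhiEven_eq_mul hp0.le hp1.le hd, mul_div_cancel_left₀]
  have : 0 < (4 - 3 * p) / 2 := by linarith
  positivity

lemma abs_covariance_div_variance_le (hp0 : 0 < p) (hp1 : p < 1) (hd : 0 < d) :
    |(∫ ω, (PhiEven d ω - 1 / 2 * (2 - p) ^ d) * (PhiOdd d ω - 1 / 2 * (2 - p) ^ d)
          ∂percMeasure d p) / Var[PhiEven d; percMeasure d p]|
      ≤ d * decayRate p ^ (d - 1) := by
  have hρ0 := decayRate_pos hp1.le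
  have hρ1 := decayRate_lt_one hp0 hp1
  have hN : 0 < 1 / 2 * ((4 - 3 * p) / 2) ^ d := by
    have : 0 < (4 - 3 * p) / 2 := by linarith
    positivity
  have h1ρ : 0 < 1 - decayRate p := by linarith
  have hgap : 1 - decayRate p ≤ 1 - decayRate p ^ d := by
    linarith [pow_le_of_le_one hρ0.le hρ1.le hd.ne']
  rw [covariance_PhiEven_PhiOdd_eq_mul hp0.le hp1.le hd, variance_PhiEven_eq_mul hp0.le hp1.le hd,
    mul_div_mul_left _ _ hN.ne', abs_of_nonneg (div_nonneg (by positivity) (by linarith)),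
    div_le_iff₀ (by linarith)]
  have : 0 ≤ (d : ℝ) * decayRate p ^ (d - 1) := by positivity
  nlinarith

lemma exists_abs_covariance_div_variance_le_exp (hp0 : 0 < p) (hp1 : p < 1) :
    ∃ C > (0 : ℝ), ∃ c > (0 : ℝ), ∀ d : ℕ, 1 ≤ d →
      |(∫ ω, (PhiEven d ω - 1 / 2 * (2 - p) ^ d) * (PhiOdd d ω - 1 / 2 * (2 - p) ^ d)
            ∂percMeasure d p) / Var[PhiEven d; percMeasure d p]|
        ≤ C * Real.exp (-c * d) := by
  have hρ0 := decayRate_pos hp1.le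
  obtain ⟨C, hC, c, hc, hbound⟩ := exists_nat_mul_pow_le_exp hρ0 (decayRate_lt_one hp0 hp1)
  refine ⟨C / decayRate p, div_pos hC hρ0, c, hc, fun d hd => ?_⟩
  calc _ ≤ d * decayRate p ^ (d - 1) := abs_covariance_div_variance_le hp0 hp1 hd
    _ = d * decayRate p ^ d / decayRate p := by
      rw [← Nat.sub_add_cancel hd, pow_succ, Nat.add_sub_cancel]
      field_simp
    _ ≤ C / decayRate p * Real.exp (-c * d) := by
      rw [div_mul_eq_mul_div]
      gcongr ?_ / _
      exact hbound d

end Asymptotics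

theorem Phi_moments (p : ℝ) (hp0 : 0 ≤ p) (hp1 : p ≤ 1) :
    (∀ d : ℕ, 1 ≤ d →
      (∫ ω, PhiEven d ω ∂(percMeasure d p)) = (1 / 2) * (2 - p) ^ d ∧
      (∫ ω, PhiOdd d ω ∂(percMeasure d p)) = (1 / 2) * (2 - p) ^ d) ∧
    (∀ d : ℕ, 1 ≤ d →
      variance (PhiEven d) (percMeasure d p)
          = 2 ^ (d - 1) * ((1 - 3 * p / 4) ^ d - (1 - p / 2) ^ (2 * d)) ∧
      variance (PhiOdd d) (percMeasure d p)
          = 2 ^ (d - 1) * ((1 - 3 * p / 4) ^ d - (1 - p / 2) ^ (2 * d))) ∧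
    (0 < p → p < 1 →
      Tendsto (fun d : ℕ => variance (PhiEven d) (percMeasure d p)
          / ((1 / 2) * ((4 - 3 * p) / 2) ^ d)) atTop (nhds 1)) ∧
    (∀ d : ℕ, 1 ≤ d →
      (∫ ω, (PhiEven d ω - (1 / 2) * (2 - p) ^ d) * (PhiOdd d ω - (1 / 2) * (2 - p) ^ d)
          ∂(percMeasure d p))
        = (d : ℝ) * ((2 - p) ^ 2 / 2) ^ (d - 1) * (p * (1 - p) / 4)) ∧
    (0 < p → p < 1 → ∃ C > (0 : ℝ), ∃ c > (0 : ℝ), ∀ d : ℕ, 1 ≤ d →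
      |(∫ ω, (PhiEven d ω - (1 / 2) * (2 - p) ^ d) * (PhiOdd d ω - (1 / 2) * (2 - p) ^ d)
            ∂(percMeasure d p))
          / variance (PhiEven d) (percMeasure d p)|
        ≤ C * Real.exp (-c * d)) :=
  ⟨fun _ hd => ⟨integral_PhiEven hp0 hp1 hd, integral_PhiOdd hp0 hp1 hd⟩,
    fun _ hd => ⟨variance_PhiEven hp0 hp1 hd, variance_PhiOdd hp0 hp1 hd⟩,
    tendsto_variance_PhiEven_div,
    fun _ hd => covariance_PhiEven_PhiOdd hp0 hp1 hd,
    exists_abs_covariance_div_variance_le_exp⟩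

end PercolatedHypercube
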